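/- In a discounted MDP, let π and π' be two policies such that π'(s) = π(s) for every improvement state s ∈ S^π. Then π' ⪯ π. -/

import Mathlib

/-- The transition matrix induced by a policy. -/
noncomputable def polMatrix {n k : ℕ} (P : Fin n → Fin k → Fin n → ℝ)
    (π : Fin n → Fin k) : Matrix (Fin n) (Fin n) ℝ :=
  Matrix.of fun s s' => P s (π s) s'

/-- The reward vector induced by a policy. -/
noncomputable def polReward {n k : ℕ} (r : Fin n → Fin k → ℝ)
    (π : Fin n → Fin k) : Fin n → ℝ :=
  fun s => r s (π s)

/-- The value vector of a policy: `v^π = ∑_{i=0}^∞ γ^i (P^π)^i r^π`. -/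
noncomputable def polValue {n k : ℕ} (P : Fin n → Fin k → Fin n → ℝ)
    (r : Fin n → Fin k → ℝ) (γ : ℝ) (π : Fin n → Fin k) : Fin n → ℝ :=
  ∑' i : ℕ, γ ^ i • (polMatrix P π ^ i).mulVec (polReward r π)

/-- `π ⪯ π'` : the policy `π'` dominates `π`. -/
def Dominates {n k : ℕ} (P : Fin n → Fin k → Fin n → ℝ) (r : Fin n → Fin k → ℝ)
    (γ : ℝ) (π π' : Fin n → Fin k) : Prop :=
  ∀ s, polValue P r γ π s ≤ polValue P r γ π' s

/-- `π ≺ π'` : the policy `π'` strictly dominates `π`. -/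
def StrictDominates {n k : ℕ} (P : Fin n → Fin k → Fin n → ℝ) (r : Fin n → Fin k → ℝ)
    (γ : ℝ) (π π' : Fin n → Fin k) : Prop :=
  Dominates P r γ π π' ∧ ∃ s, polValue P r γ π s < polValue P r γ π' s

/-- A set of state-action pairs is well-defined if it contains each state at most once. -/
def WellDefined {n k : ℕ} (U : Set (Fin n × Fin k)) : Prop :=
  ∀ s a a', (s, a) ∈ U → (s, a') ∈ U → a = a'

-- `π ⊕ U` : the policy obtained from `π` by switching the action at `s` to `a`
-- for each `(s, a) ∈ U` (intended for well-defined `U`).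
open Classical in
noncomputable def switch {n k : ℕ} (π : Fin n → Fin k) (U : Set (Fin n × Fin k)) :
    Fin n → Fin k :=
  fun s => if h : ∃ a, (s, a) ∈ U then h.choose else π s

/-- The improvement set `T^π = {(s,a) : π ⊕ {(s,a)} ≻ π}`. -/
def improvementSet {n k : ℕ} (P : Fin n → Fin k → Fin n → ℝ) (r : Fin n → Fin k → ℝ)
    (γ : ℝ) (π : Fin n → Fin k) : Set (Fin n × Fin k) :=
  {p | StrictDominates P r γ π (Function.update π p.1 p.2)}

/-- The set of improvement states `S^π`. -/
def improvementStates {n k : ℕ} (P : Fin n → Fin k → Fin n → ℝ) (r : Fin n → Fin k → ℝ)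
    (γ : ℝ) (π : Fin n → Fin k) : Set (Fin n) :=
  {s | ∃ a, (s, a) ∈ improvementSet P r γ π}

/-!
Write `A^τ = r^τ + γ P^τ v^π - v^π` for the one-step advantage of `τ` over `π`. The Bellman
equation `v = r + γ P v` gives `v^τ - v^π = A^τ + γ P^τ (v^τ - v^π)`, and since `P^τ` is
row-stochastic and `γ < 1`, a minimum principle shows that `v^τ - v^π` has the sign of `A^τ`
whenever `A^τ` has a constant sign. `A^τ(t)` only depends on `τ t`, and vanishes when `τ t = π t`.
If `A^{π'}(t) > 0` at some state `t`, the single switch `π ⊕ {(t, π' t)}` would have a nonnegative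
advantage, positive at `t`, so it would strictly dominate `π` and `t` would be an improvement
state, where `π'` agrees with `π`. Hence `A^{π'} ≤ 0`, and so `v^{π'} ≤ v^π`.
-/

open Matrix

namespace Matrix

variable {ι : Type*} [Fintype ι] [DecidableEq ι] {M : Matrix ι ι ℝ} {γ : ℝ}

theorem norm_mulVec_le_of_mem_rowStochastic (hM : M ∈ rowStochastic ℝ ι) (w : ι → ℝ) :
    ‖M *ᵥ w‖ ≤ ‖w‖ := by
  refine (pi_norm_le_iff_of_nonneg (norm_nonneg w)).2 fun i => ?_
  calc ‖(M *ᵥ w) i‖ ≤ ∑ j, ‖M i j * w j‖ := norm_sum_le _ _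
    _ ≤ ∑ j, M i j * ‖w‖ := Finset.sum_le_sum fun j _ => by
        rw [norm_mul, Real.norm_of_nonneg (hM.1 i j)]
        exact mul_le_mul_of_nonneg_left (norm_le_pi_norm w j) (hM.1 i j)
    _ = ‖w‖ := by rw [← Finset.sum_mul, sum_row_of_mem_rowStochastic hM, one_mul]

theorem summable_pow_smul_mulVec (hM : M ∈ rowStochastic ℝ ι) (hγ0 : 0 ≤ γ) (hγ1 : γ < 1)
    (w : ι → ℝ) : Summable fun i : ℕ => γ ^ i • (M ^ i *ᵥ w) := by
  refine Summable.of_norm_bounded ((summable_geometric_of_lt_one hγ0 hγ1).mul_right ‖w‖)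
    fun i => ?_
  rw [norm_smul, Real.norm_of_nonneg (pow_nonneg hγ0 i)]
  exact mul_le_mul_of_nonneg_left
    (norm_mulVec_le_of_mem_rowStochastic (pow_mem hM i) w) (pow_nonneg hγ0 i)

theorem tsum_pow_smul_mulVec_eq (hM : M ∈ rowStochastic ℝ ι) (hγ0 : 0 ≤ γ) (hγ1 : γ < 1)
    (w : ι → ℝ) :
    ∑' i : ℕ, γ ^ i • (M ^ i *ᵥ w) = w + γ • M *ᵥ ∑' i : ℕ, γ ^ i • (M ^ i *ᵥ w) := by
  have hs := summable_pow_smul_mulVec hM hγ0 hγ1 w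
  have hmap : HasSum (fun i : ℕ => γ • M *ᵥ (γ ^ i • (M ^ i *ᵥ w)))
      (γ • M *ᵥ ∑' i : ℕ, γ ^ i • (M ^ i *ᵥ w)) :=
    hs.hasSum.map (γ • mulVecLin M) ((continuous_const.matrix_mulVec continuous_id).const_smul γ)
  rw [← hmap.tsum_eq, hs.tsum_eq_zero_add, pow_zero, pow_zero, one_smul, one_mulVec]
  congr 1
  refine tsum_congr fun i => ?_
  rw [mulVec_smul, smul_smul, pow_succ', pow_succ', mulVec_mulVec]

theorem nonneg_of_eq_add_smul_mulVec (hM : M ∈ rowStochastic ℝ ι) (hγ0 : 0 ≤ γ) (hγ1 : γ < 1)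
    {a d : ι → ℝ} (ha : 0 ≤ a) (hd : d = a + γ • M *ᵥ d) : 0 ≤ d := by
  intro s
  have : Nonempty ι := ⟨s⟩
  obtain ⟨s₀, hs₀⟩ := Finite.exists_min d
  have hmin : d s₀ ≤ (M *ᵥ d) s₀ :=
    calc d s₀ = ∑ j, M s₀ j * d s₀ := by
          rw [← Finset.sum_mul, sum_row_of_mem_rowStochastic hM, one_mul]
      _ ≤ ∑ j, M s₀ j * d j :=
          Finset.sum_le_sum fun j _ => mul_le_mul_of_nonneg_left (hs₀ j) (hM.1 s₀ j)
  have hds₀ : d s₀ = a s₀ + γ * (M *ᵥ d) s₀ := congrFun hd s₀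
  have : 0 ≤ d s₀ := by
    have ha₀ : 0 ≤ a s₀ := ha s₀
    nlinarith [mul_nonneg hγ0 (sub_nonneg.2 hmin)]
  exact this.trans (hs₀ s)

end Matrix

section MDP

variable {n k : ℕ} {P : Fin n → Fin k → Fin n → ℝ} {r : Fin n → Fin k → ℝ} {γ : ℝ}

theorem polMatrix_mem_rowStochastic (hP0 : ∀ s a s', 0 ≤ P s a s')
    (hP1 : ∀ s a, ∑ s', P s a s' = 1) (π : Fin n → Fin k) :
    polMatrix P π ∈ rowStochastic ℝ (Fin n) :=
  mem_rowStochastic_iff_sum.2 ⟨fun s s' => hP0 s (π s) s', fun s => hP1 s (π s)⟩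

theorem polValue_eq_bellman (hP : ∀ π, polMatrix P π ∈ rowStochastic ℝ (Fin n)) (hγ0 : 0 ≤ γ)
    (hγ1 : γ < 1) (π : Fin n → Fin k) :
    polValue P r γ π = polReward r π + γ • polMatrix P π *ᵥ polValue P r γ π :=
  tsum_pow_smul_mulVec_eq (hP π) hγ0 hγ1 _

variable (P r γ) in
noncomputable def advantage (π τ : Fin n → Fin k) : Fin n → ℝ :=
  polReward r τ + γ • polMatrix P τ *ᵥ polValue P r γ π - polValue P r γ π

theorem advantage_apply_congr {π τ τ' : Fin n → Fin k} {t : Fin n} (h : τ t = τ' t) :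
    advantage P r γ π τ t = advantage P r γ π τ' t := by
  simp [advantage, polReward, polMatrix, mulVec, dotProduct, h]

theorem advantage_apply_eq_zero (hP : ∀ π, polMatrix P π ∈ rowStochastic ℝ (Fin n))
    (hγ0 : 0 ≤ γ) (hγ1 : γ < 1) {π τ : Fin n → Fin k} {t : Fin n} (h : τ t = π t) :
    advantage P r γ π τ t = 0 := by
  rw [advantage_apply_congr h, advantage, ← polValue_eq_bellman hP hγ0 hγ1, sub_self,
    Pi.zero_apply]

theorem polValue_sub_eq (hP : ∀ π, polMatrix P π ∈ rowStochastic ℝ (Fin n)) (hγ0 : 0 ≤ γ)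
    (hγ1 : γ < 1) (π τ : Fin n → Fin k) :
    polValue P r γ τ - polValue P r γ π = advantage P r γ π τ
      + γ • polMatrix P τ *ᵥ (polValue P r γ τ - polValue P r γ π) := by
  conv_lhs => rw [polValue_eq_bellman hP hγ0 hγ1 τ]
  rw [advantage, mulVec_sub, smul_sub]
  abel

theorem advantage_le_polValue_sub (hP : ∀ π, polMatrix P π ∈ rowStochastic ℝ (Fin n))
    (hγ0 : 0 ≤ γ) (hγ1 : γ < 1) {π τ : Fin n → Fin k} (h : 0 ≤ advantage P r γ π τ) :
    advantage P r γ π τ ≤ polValue P r γ τ - polValue P r γ π := by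
  have hdiff := polValue_sub_eq (r := r) hP hγ0 hγ1 π τ
  have hnonneg := nonneg_of_eq_add_smul_mulVec (hP τ) hγ0 hγ1 h hdiff
  rw [hdiff]
  exact le_add_of_nonneg_right
    (smul_nonneg hγ0 (nonneg_mulVec_of_mem_rowStochastic (hP τ) hnonneg))

theorem dominates_of_advantage_nonpos (hP : ∀ π, polMatrix P π ∈ rowStochastic ℝ (Fin n))
    (hγ0 : 0 ≤ γ) (hγ1 : γ < 1) {π τ : Fin n → Fin k} (h : advantage P r γ π τ ≤ 0) :
    Dominates P r γ τ π := by
  have hdiff := congrArg Neg.neg (polValue_sub_eq (r := r) hP hγ0 hγ1 π τ)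
  rw [neg_add, ← smul_neg, ← mulVec_neg] at hdiff
  intro s
  simpa using nonneg_of_eq_add_smul_mulVec (hP τ) hγ0 hγ1 (neg_nonneg.2 h) hdiff s

theorem advantage_update_nonpos_of_notMem_improvementStates
    (hP : ∀ π, polMatrix P π ∈ rowStochastic ℝ (Fin n)) (hγ0 : 0 ≤ γ) (hγ1 : γ < 1)
    {π : Fin n → Fin k} {t : Fin n} (ht : t ∉ improvementStates P r γ π) (a : Fin k) :
    advantage P r γ π (Function.update π t a) t ≤ 0 := by
  by_contra! hpos
  have hnonneg : 0 ≤ advantage P r γ π (Function.update π t a) := by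
    intro j
    by_cases hj : j = t
    · subst hj
      exact hpos.le
    · exact (advantage_apply_eq_zero hP hγ0 hγ1 (Function.update_of_ne hj a π)).ge
  have hle := advantage_le_polValue_sub hP hγ0 hγ1 hnonneg
  refine ht ⟨a, fun s => ?_, t, ?_⟩
  · simpa using (hnonneg s).trans (hle s)
  · simpa using hpos.trans_le (hle t)

end MDP

theorem agree_on_improvement_states_general (n k : ℕ)
    (P : Fin n → Fin k → Fin n → ℝ) (r : Fin n → Fin k → ℝ) (γ : ℝ)
    (hP0 : ∀ s a s', 0 ≤ P s a s') (hP1 : ∀ s a, ∑ s', P s a s' = 1)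
    (hγ0 : 0 ≤ γ) (hγ1 : γ < 1)
    (π π' : Fin n → Fin k)
    (hagree : ∀ s ∈ improvementStates P r γ π, π' s = π s) :
    Dominates P r γ π' π := by
  have hP := polMatrix_mem_rowStochastic hP0 hP1
  refine dominates_of_advantage_nonpos hP hγ0 hγ1 fun t => ?_
  by_cases ht : t ∈ improvementStates P r γ π
  · exact (advantage_apply_eq_zero hP hγ0 hγ1 (hagree t ht)).le
  · rw [Pi.zero_apply, advantage_apply_congr (τ' := Function.update π t (π' t)) (by simp)]
    exact advantage_update_nonpos_of_notMem_improvementStates hP hγ0 hγ1 ht (π' t)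

theorem agree_on_improvement_states (n k : ℕ) (hn : 1 ≤ n) (hk : 1 ≤ k)
    (P : Fin n → Fin k → Fin n → ℝ) (r : Fin n → Fin k → ℝ) (γ : ℝ)
    (hP0 : ∀ s a s', 0 ≤ P s a s') (hP1 : ∀ s a, ∑ s', P s a s' = 1)
    (hγ0 : 0 ≤ γ) (hγ1 : γ < 1)
    (π π' : Fin n → Fin k)
    (hagree : ∀ s ∈ improvementStates P r γ π, π' s = π s) :
    Dominates P r γ π' π :=
  agree_on_improvement_states_general n k P r γ hP0 hP1 hγ0 hγ1 π π' hagree
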